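/- Fix an integer p ≥ 1, set n = 2p, and let θ, the couplings g_{ab} (with g ≠ 0 and g_2 arbitrary real numbers), and the matrices F_{ab} be as in the q = p case of the AIII construction. Then the constraint equation Σ_{α} g_α F_α = 0 holds: Σ_{1 ≤ a ≠ b ≤ n} g_{ab}·F_{ab} = 0 as an n×n matrix. -/

import Mathlib

open Matrix

/-- The involution `θ` of `{1,…,2p}` (0-based: `{0,…,2p−1}`) exchanging the first
and third blocks: `θ(a) = a + p` for `a < p` and `θ(a) = a − p` otherwise. -/
def theta1 (p : ℕ) (a : Fin (2*p)) : Fin (2*p) :=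
  if h : (a : ℕ) < p then ⟨a + p, by omega⟩
  else ⟨(a : ℕ) - p, by have := a.isLt; omega⟩

/-- The coupling constants for the AIII construction with `q = p`:
`g_{aa} = 0`, `g_{ab} = g₂` if `b = θ(a)`, and `g_{ab} = g` otherwise. -/
def g10 (p : ℕ) (g g2 : ℝ) (a b : Fin (2*p)) : ℝ :=
  if a = b then 0 else if b = theta1 p a then g2 else g

/-- The matrices `F_{ab} = -(1/4)(E_{aa} + E_{θ(a)θ(a)} + E_{bb} + E_{θ(b)θ(b)}) + (1/n)·1`
for the AIII construction with `q = p`, `n = 2p`. -/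
noncomputable def F10 (p : ℕ) (a b : Fin (2*p)) : Matrix (Fin (2*p)) (Fin (2*p)) ℝ :=
  -(1/4 : ℝ) • (single a a 1 + single (theta1 p a) (theta1 p a) 1
      + single b b 1 + single (theta1 p b) (theta1 p b) 1)
    + ((2*p : ℝ))⁻¹ • 1

/-!
The couplings `g_{ab}` form a symmetric matrix whose rows and columns all sum to
`S = g₂ + (n - 2) g`, because `θ` is a fixed-point-free involution. Summing `g_{ab} F_{ab}`
over all pairs (the diagonal terms vanish as `g_{aa} = 0`), each of the four matrix-unit terms
of `F_{ab}` therefore contributes `S • 1` (the `θ`-terms because `θ` permutes the indices), and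
the scalar term contributes `n S / n • 1 = S • 1`, giving `-(1/4) • 4S • 1 + S • 1 = 0`.
-/

theorem sum_sum_smul_of_sum_eq {ι R E : Type*} [Fintype ι] [Semiring R] [AddCommMonoid E]
    [Module R E] {w : ι → ι → R} {S : R}
    (hrow : ∀ a, ∑ b, w a b = S) (M : ι → E) :
    ∑ a, ∑ b, w a b • M a = S • ∑ a, M a := by
  simp only [← Finset.sum_smul, hrow, Finset.smul_sum]

section Constraint

variable {ι : Type*} [DecidableEq ι]

def coupling (θ : ι → ι) (g g₂ : ℝ) (a b : ι) : ℝ :=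
  if a = b then 0 else if b = θ a then g₂ else g

theorem coupling_comm {θ : ι → ι} (hθ : Function.Involutive θ) (g g₂ : ℝ) (a b : ι) :
    coupling θ g g₂ a b = coupling θ g g₂ b a := by
  simp only [coupling, eq_comm (a := a), ← hθ.eq_iff]

variable [Fintype ι]

noncomputable def constraintMatrix (θ : ι → ι) (a b : ι) : Matrix ι ι ℝ :=
  -(1/4 : ℝ) • (single a a 1 + single (θ a) (θ a) 1 + single b b 1 + single (θ b) (θ b) 1)
    + (Fintype.card ι : ℝ)⁻¹ • 1

theorem sum_coupling_right {θ : ι → ι} (hθ : ∀ a, θ a ≠ a) (g g₂ : ℝ) (a : ι) :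
    ∑ b, coupling θ g g₂ a b = g₂ + (Fintype.card ι - 2) * g := by
  have split : ∀ b, coupling θ g g₂ a b
      = g - (if b = a then g else 0) + (if b = θ a then g₂ - g else 0) := by
    intro b
    rcases eq_or_ne b a with rfl | hba
    · simp [coupling, (hθ b).symm]
    · simp only [coupling, hba, hba.symm, if_false]
      split_ifs <;> ring
  simp only [split, Finset.sum_add_distrib, Finset.sum_sub_distrib, Finset.sum_ite_eq',
    Finset.mem_univ, if_true, Finset.sum_const, Finset.card_univ, nsmul_eq_mul]
  ring

theorem sum_coupling_left {θ : ι → ι} (hθ : Function.Involutive θ) (hθ' : ∀ a, θ a ≠ a)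
    (g g₂ : ℝ) (b : ι) :
    ∑ a, coupling θ g g₂ a b = g₂ + (Fintype.card ι - 2) * g := by
  simp only [coupling_comm hθ _ _ _ b, sum_coupling_right hθ']

theorem sum_single_perm_one (θ : Equiv.Perm ι) :
    ∑ a, single (θ a) (θ a) (1 : ℝ) = 1 :=
  (Equiv.sum_comp θ fun a => single a a (1 : ℝ)).trans sum_single_one

theorem sum_sum_smul_constraintMatrix (θ : Equiv.Perm ι) {w : ι → ι → ℝ} {S : ℝ}
    (hrow : ∀ a, ∑ b, w a b = S) (hcol : ∀ b, ∑ a, w a b = S) :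
    ∑ a, ∑ b, w a b • constraintMatrix θ a b = 0 := by
  rcases isEmpty_or_nonempty ι with hι | hι
  · exact Subsingleton.elim _ _
  have hrow' : ∀ M : ι → Matrix ι ι ℝ, ∑ a, ∑ b, w a b • M a = S • ∑ a, M a :=
    sum_sum_smul_of_sum_eq hrow
  have hcol' : ∀ M : ι → Matrix ι ι ℝ, ∑ a, ∑ b, w a b • M b = S • ∑ b, M b := by
    intro M
    rw [Finset.sum_comm]
    exact sum_sum_smul_of_sum_eq hcol M
  have hconst : ∑ a : ι, (Fintype.card ι : ℝ)⁻¹ • (1 : Matrix ι ι ℝ) = 1 := by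
    rw [Finset.sum_const, Finset.card_univ, ← Nat.cast_smul_eq_nsmul ℝ, smul_smul,
      mul_inv_cancel₀ (by positivity), one_smul]
  calc ∑ a, ∑ b, w a b • constraintMatrix θ a b
      = -(1/4 : ℝ) • (∑ a, ∑ b, w a b • single a a 1 + ∑ a, ∑ b, w a b • single (θ a) (θ a) 1
          + ∑ a, ∑ b, w a b • single b b 1 + ∑ a, ∑ b, w a b • single (θ b) (θ b) 1)
        + ∑ a, ∑ b, w a b • ((Fintype.card ι : ℝ)⁻¹ • (1 : Matrix ι ι ℝ)) := by
        simp only [constraintMatrix, smul_add, smul_comm (w _ _) (-(1/4 : ℝ)),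
          Finset.sum_add_distrib, Finset.smul_sum]
    _ = -(1/4 : ℝ) • (S • 1 + S • 1 + S • 1 + S • 1) + S • 1 := by
        rw [hrow', hrow', hcol', hcol', hrow' fun _ => _, sum_single_one, sum_single_perm_one,
          hconst]
    _ = 0 := by module

end Constraint

theorem theta1_val (p : ℕ) (a : Fin (2*p)) :
    (theta1 p a : ℕ) = if (a : ℕ) < p then a + p else a - p := by
  unfold theta1
  split_ifs <;> rfl

theorem theta1_involutive (p : ℕ) : Function.Involutive (theta1 p) := by
  intro a
  have := a.isLt
  ext
  rw [theta1_val, theta1_val]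
  split_ifs <;> omega

theorem theta1_ne (p : ℕ) (a : Fin (2*p)) : theta1 p a ≠ a := by
  have := a.isLt
  rw [ne_eq, Fin.ext_iff, theta1_val]
  split_ifs <;> omega

theorem F10_eq_constraintMatrix (p : ℕ) (a b : Fin (2*p)) :
    F10 p a b = constraintMatrix (theta1_involutive p).toPerm a b := by
  simp [F10, constraintMatrix]

theorem stmt_12_general (p : ℕ) (g g2 : ℝ) :
    ∑ a : Fin (2*p), ∑ b ∈ Finset.univ.filter (fun b : Fin (2*p) => b ≠ a),
      g10 p g g2 a b • F10 p a b = 0 := by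
  have drop_diagonal : ∀ a : Fin (2*p),
      ∑ b ∈ Finset.univ.filter (fun b => b ≠ a), g10 p g g2 a b • F10 p a b
        = ∑ b, g10 p g g2 a b • F10 p a b :=
    fun a => Finset.sum_filter_of_ne fun b _ hb hba => hb (by simp [hba, g10])
  rw [Finset.sum_congr rfl fun a _ => drop_diagonal a]
  simp only [F10_eq_constraintMatrix]
  exact sum_sum_smul_constraintMatrix _ (sum_coupling_right (theta1_ne p) g g2)
    (sum_coupling_left (theta1_involutive p) (theta1_ne p) g g2)

theorem stmt_12 (p : ℕ) (hp : 1 ≤ p) (g g2 : ℝ) (hg : g ≠ 0) :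
    ∑ a : Fin (2*p), ∑ b ∈ Finset.univ.filter (fun b : Fin (2*p) => b ≠ a),
      g10 p g g2 a b • F10 p a b = 0 :=
  stmt_12_general p g g2
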